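/- Let F : ℝ^m → ℝ^m be smooth, p⁻ ≪ p⁺ in ℝ^m, and suppose F(p⁻) = 0 and DF(p⁻)φ⁻ = −λ₋ φ⁻ for some constant λ₋ > 0 and a unit vector φ⁻ ≫ 0. Let K := max{1, sup_{w ∈ [p⁻,p⁺]} |D²F(w)|} and let δ > 0 satisfy δ·K < min_{1≤l≤m} λ₋ φ_l⁻ and δ·φ_l⁻ < p_l⁺ − p_l⁻ for every l. Then for every w ∈ ℝ^m with p⁻ ≼ w ≼ p⁻ + (δ/2)φ⁻ and every ε ∈ [0, δ/2], one has F(w) ≽ F(w + ε φ⁻). -/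

import Mathlib

/-!
For `u` in the box `[p⁻, p⁻ + δφ⁻]`, which `δφ⁻ ≪ p⁺ - p⁻` keeps inside `[p⁻, p⁺]`, the mean
value theorem along the segment from `p⁻` to `u` and Cauchy–Schwarz against `|D²F| ≤ K` give
`|DF(u)φ⁻ - DF(p⁻)φ⁻| ≤ K |u - p⁻| ≤ δK`. As `DF(p⁻)φ⁻ = -λ₋φ⁻` and `δK < λ₋φ_l⁻`, every
component of `DF(u)φ⁻` is negative there, so each `f_l` decreases along `t ↦ w + tφ⁻` while
`t ∈ [0, δ/2]`.
-/

noncomputable section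

/-- Second partial derivative `∂²f_l/∂u_j∂u_k` of `F : ℝ^m → ℝ^m` at `w`. -/
def pd2 {m : ℕ} (F : (Fin m → ℝ) → Fin m → ℝ) (w : Fin m → ℝ) (j k l : Fin m) : ℝ :=
  fderiv ℝ (fun v => fderiv ℝ F v (Pi.single k 1) l) w (Pi.single j 1)

/-- Frobenius (Euclidean) norm of the full second derivative of `F` at `w`. -/
def frobD2 {m : ℕ} (F : (Fin m → ℝ) → Fin m → ℝ) (w : Fin m → ℝ) : ℝ :=
  Real.sqrt (∑ l, ∑ j, ∑ k, (pd2 F w j k l) ^ 2)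

/-- The closed box `[p⁻, p⁺]` in `ℝ^m`. -/
def closedBox {m : ℕ} (pm pp : Fin m → ℝ) : Set (Fin m → ℝ) :=
  {w | ∀ i, pm i ≤ w i ∧ w i ≤ pp i}

open Finset

lemma ContinuousLinearMap.apply_eq_sum_single {ι E : Type*} [Fintype ι] [DecidableEq ι]
    [NormedAddCommGroup E] [NormedSpace ℝ E] (L : (ι → ℝ) →L[ℝ] E) (x : ι → ℝ) :
    L x = ∑ k, x k • L (Pi.single k 1) := by
  conv_lhs => rw [pi_eq_sum_univ x, map_sum]
  simp only [map_smul, ← Pi.single_apply, Pi.single_comm]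

lemma abs_sum_sum_mul_mul_le {ι κ : Type*} [Fintype ι] [Fintype κ]
    (a : ι → ℝ) (b : κ → ℝ) (A : ι → κ → ℝ) :
    |∑ j, ∑ k, a j * b k * A j k| ≤
      √(∑ j, a j ^ 2) * √(∑ k, b k ^ 2) * √(∑ j, ∑ k, A j k ^ 2) := by
  have hcs := sum_mul_sq_le_sq_mul_sq (univ ×ˢ univ) (fun p : ι × κ => a p.1 * b p.2)
    (fun p => A p.1 p.2)
  simp only [sum_product, mul_pow, ← mul_sum, ← sum_mul] at hcs
  rw [← Real.sqrt_mul (by positivity), ← Real.sqrt_mul (by positivity)]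
  exact Real.abs_le_sqrt (by simpa only [mul_assoc] using hcs)

lemma sqrt_sum_sq_le_of_le_smul {ι : Type*} [Fintype ι] {d φ : ι → ℝ} {δ : ℝ} (hδ : 0 ≤ δ)
    (hd₀ : 0 ≤ d) (hd : d ≤ δ • φ) : √(∑ j, d j ^ 2) ≤ δ * √(∑ j, φ j ^ 2) := by
  rw [← Real.sqrt_sq hδ, ← Real.sqrt_mul (sq_nonneg δ), mul_sum]
  gcongr with j
  calc d j ^ 2 ≤ (δ * φ j) ^ 2 := pow_le_pow_left₀ (hd₀ j) (hd j) 2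
    _ = δ ^ 2 * φ j ^ 2 := mul_pow _ _ _

lemma ContDiff.fderiv_apply_apply {E ι : Type*} [NormedAddCommGroup E] [NormedSpace ℝ E]
    [Fintype ι] {F : E → ι → ℝ} {n : WithTop ℕ∞} (hF : ContDiff ℝ (n + 1) F) (v : E) (l : ι) :
    ContDiff ℝ n (fun w => fderiv ℝ F w v l) :=
  (contDiff_apply ℝ ℝ l).comp ((hF.fderiv_right le_rfl).clm_apply contDiff_const)

section SecondDerivative

variable {m : ℕ} {F : (Fin m → ℝ) → Fin m → ℝ}

lemma continuous_frobD2 (hF : ContDiff ℝ 2 F) : Continuous (frobD2 F) := by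
  have hpd2 : ∀ j k l : Fin m, Continuous fun w => pd2 F w j k l := fun j k l =>
    ((hF.fderiv_apply_apply (n := 1) (Pi.single k 1) l).continuous_fderiv one_ne_zero).clm_apply
      continuous_const
  unfold frobD2
  fun_prop

lemma closedBox_eq_Icc (pm pp : Fin m → ℝ) : closedBox pm pp = Set.Icc pm pp := by
  ext w
  simp [closedBox, Pi.le_def, forall_and]

lemma frobD2_le_sSup (hF : ContDiff ℝ 2 F) {pm pp w : Fin m → ℝ} (hw : w ∈ closedBox pm pp) :
    frobD2 F w ≤ sSup {r : ℝ | ∃ w ∈ closedBox pm pp, r = frobD2 F w} := by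
  have himage : {r : ℝ | ∃ w ∈ closedBox pm pp, r = frobD2 F w} = frobD2 F '' closedBox pm pp := by
    ext r
    simp [eq_comm]
  rw [himage]
  refine le_csSup ?_ (Set.mem_image_of_mem _ hw)
  rw [closedBox_eq_Icc]
  exact (isCompact_Icc.image (continuous_frobD2 hF)).bddAbove

lemma sqrt_sum_sq_pd2_le_frobD2 (w : Fin m → ℝ) (l : Fin m) :
    √(∑ j, ∑ k, pd2 F w j k l ^ 2) ≤ frobD2 F w :=
  Real.sqrt_le_sqrt <| single_le_sum (f := fun l => ∑ j, ∑ k, pd2 F w j k l ^ 2)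
    (fun _ _ => by positivity) (mem_univ l)

lemma hasDerivAt_fderiv_apply_apply_add_smul (hF : ContDiff ℝ 2 F) (x d φ : Fin m → ℝ)
    (l : Fin m) (t : ℝ) :
    HasDerivAt (fun s : ℝ => fderiv ℝ F (x + s • d) φ l)
      (∑ j, ∑ k, d j * φ k * pd2 F (x + t • d) j k l) t := by
  have hline : HasDerivAt (fun s : ℝ => x + s • d) d t := by
    simpa using ((hasDerivAt_id t).smul_const d).const_add x
  have hpartial : ∀ k, HasDerivAt (fun s : ℝ => fderiv ℝ F (x + s • d) (Pi.single k 1) l)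
      (∑ j, d j * pd2 F (x + t • d) j k l) t := by
    intro k
    have h := (((hF.fderiv_apply_apply (n := 1) (Pi.single k 1) l).differentiable
      one_ne_zero) (x + t • d)).hasFDerivAt.comp_hasDerivAt t hline
    rwa [ContinuousLinearMap.apply_eq_sum_single] at h
  have hexpand : (fun s : ℝ => fderiv ℝ F (x + s • d) φ l) =
      fun s => ∑ k, φ k * fderiv ℝ F (x + s • d) (Pi.single k 1) l := by
    funext s
    rw [ContinuousLinearMap.apply_eq_sum_single]
    simp
  rw [hexpand]
  refine (HasDerivAt.fun_sum fun k _ => (hpartial k).const_mul (φ k)).congr_deriv ?_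
  rw [sum_comm]
  simp only [mul_sum]
  exact sum_congr rfl fun _ _ => sum_congr rfl fun _ _ => by ring

lemma abs_fderiv_apply_apply_add_sub_le (hF : ContDiff ℝ 2 F) {x d : Fin m → ℝ} {C : ℝ}
    (hC : ∀ t ∈ Set.Icc (0 : ℝ) 1, frobD2 F (x + t • d) ≤ C) (φ : Fin m → ℝ) (l : Fin m) :
    |fderiv ℝ F (x + d) φ l - fderiv ℝ F x φ l| ≤ √(∑ j, d j ^ 2) * √(∑ k, φ k ^ 2) * C := by
  have hderiv_le : ∀ t ∈ Set.Icc (0 : ℝ) 1,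
      ‖∑ j, ∑ k, d j * φ k * pd2 F (x + t • d) j k l‖ ≤ √(∑ j, d j ^ 2) * √(∑ k, φ k ^ 2) * C :=
    fun t ht => calc
      _ ≤ √(∑ j, d j ^ 2) * √(∑ k, φ k ^ 2) * √(∑ j, ∑ k, pd2 F (x + t • d) j k l ^ 2) :=
        abs_sum_sum_mul_mul_le _ _ _
      _ ≤ √(∑ j, d j ^ 2) * √(∑ k, φ k ^ 2) * C := by
        gcongr
        exact (sqrt_sum_sq_pd2_le_frobD2 _ l).trans (hC t ht)
  have h := (convex_Icc (0 : ℝ) 1).norm_image_sub_le_of_norm_hasDerivWithin_le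
    (fun t _ => (hasDerivAt_fderiv_apply_apply_add_smul hF x d φ l t).hasDerivWithinAt)
    hderiv_le (Set.left_mem_Icc.2 zero_le_one) (Set.right_mem_Icc.2 zero_le_one)
  simpa using h

end SecondDerivative

lemma add_smul_mem_closedBox {m : ℕ} {pm pp d : Fin m → ℝ} (hd₀ : 0 ≤ d) (hd : d ≤ pp - pm)
    {t : ℝ} (ht : t ∈ Set.Icc (0 : ℝ) 1) : pm + t • d ∈ closedBox pm pp := fun i => by
  have h₀ : 0 ≤ t * d i := mul_nonneg ht.1 (hd₀ i)
  have h₁ : t * d i ≤ d i := mul_le_of_le_one_left (hd₀ i) ht.2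
  have h₂ := hd i
  simp only [Pi.add_apply, Pi.smul_apply, Pi.sub_apply, smul_eq_mul] at h₂ ⊢
  constructor <;> linarith

lemma fderiv_apply_eigvec_neg {m : ℕ} {F : (Fin m → ℝ) → Fin m → ℝ} (hF : ContDiff ℝ 2 F)
    {pm pp φ u : Fin m → ℝ} {lam K δ : ℝ} {l : Fin m}
    (heig : fderiv ℝ F pm φ = (-lam) • φ) (hunit : √(∑ j, φ j ^ 2) = 1)
    (hK : ∀ w ∈ closedBox pm pp, frobD2 F w ≤ K) (hK₀ : 0 ≤ K) (hδ : 0 ≤ δ)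
    (hδK : δ * K < lam * φ l) (hδφ : δ • φ ≤ pp - pm)
    (hu₀ : pm ≤ u) (hu : u ≤ pm + δ • φ) :
    fderiv ℝ F u φ l < 0 := by
  have hd₀ : 0 ≤ u - pm := sub_nonneg.2 hu₀
  have hd : u - pm ≤ δ • φ := sub_le_iff_le_add'.2 hu
  have hdist : √(∑ j, (u - pm) j ^ 2) ≤ δ := by
    simpa [hunit] using sqrt_sum_sq_le_of_le_smul hδ hd₀ hd
  have hsegment : ∀ t ∈ Set.Icc (0 : ℝ) 1, frobD2 F (pm + t • (u - pm)) ≤ K := fun t ht =>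
    hK _ (add_smul_mem_closedBox hd₀ (hd.trans hδφ) ht)
  have hclose := abs_fderiv_apply_apply_add_sub_le hF hsegment φ l
  rw [add_sub_cancel, hunit, mul_one, heig] at hclose
  have hnear : |fderiv ℝ F u φ l + lam * φ l| ≤ δ * K := by
    simpa [sub_eq_add_neg] using hclose.trans (mul_le_mul_of_nonneg_right hdist hK₀)
  linarith [(abs_le.1 hnear).2]

lemma apply_add_smul_le_of_fderiv_nonpos {E ι : Type*} [NormedAddCommGroup E] [NormedSpace ℝ E]
    [Fintype ι] {F : E → ι → ℝ} (hF : Differentiable ℝ F) {w φ : E} {l : ι} {a ε : ℝ}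
    (h : ∀ t ∈ Set.Icc 0 a, fderiv ℝ F (w + t • φ) φ l ≤ 0) (hε₀ : 0 ≤ ε) (hεa : ε ≤ a) :
    F (w + ε • φ) l ≤ F w l := by
  have hderiv : ∀ t : ℝ, HasDerivAt (fun s : ℝ => F (w + s • φ) l) (fderiv ℝ F (w + t • φ) φ l) t :=
    fun t => by
      have hline : HasDerivAt (fun s : ℝ => w + s • φ) φ t := by
        simpa using ((hasDerivAt_id t).smul_const φ).const_add w
      exact (hasFDerivAt_apply l _).comp_hasDerivAt t
        ((hF _).hasFDerivAt.comp_hasDerivAt t hline)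
  have hanti : AntitoneOn (fun s : ℝ => F (w + s • φ) l) (Set.Icc 0 a) :=
    antitoneOn_of_deriv_nonpos (convex_Icc 0 a)
      (fun t _ => (hderiv t).continuousAt.continuousWithinAt)
      (fun t _ => (hderiv t).differentiableAt.differentiableWithinAt)
      (fun t ht => (hderiv t).deriv ▸ h t (interior_subset ht))
  simpa using hanti ⟨le_rfl, hε₀.trans hεa⟩ ⟨hε₀, hεa⟩ hε₀

theorem F_ge_F_add_smul_eigvec_near_pminus_general
    {m : ℕ}
    (F : (Fin m → ℝ) → Fin m → ℝ) (hF : ContDiff ℝ (⊤ : ℕ∞) F)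
    (pm pp : Fin m → ℝ)
    (lamm : ℝ)
    (phim : Fin m → ℝ) (hphim : ∀ l, 0 < phim l)
    (hunit : Real.sqrt (∑ l, phim l ^ 2) = 1)
    (heig : fderiv ℝ F pm phim = (-lamm) • phim)
    (K : ℝ)
    (hK : K = max 1 (sSup {r : ℝ | ∃ w ∈ closedBox pm pp, r = frobD2 F w}))
    (δ : ℝ) (hδ : 0 < δ)
    (hδ1 : ∀ l, δ * K < lamm * phim l)
    (hδ2 : ∀ l, δ * phim l < pp l - pm l) :
    ∀ w : Fin m → ℝ, (∀ l, pm l ≤ w l ∧ w l ≤ pm l + (δ / 2) * phim l) →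
      ∀ ε : ℝ, 0 ≤ ε → ε ≤ δ / 2 → ∀ l, F w l ≥ F (w + ε • phim) l := by
  intro w hw ε hε₀ hεδ l
  have hF₂ : ContDiff ℝ 2 F := hF.of_le (WithTop.coe_le_coe.2 le_top)
  have hKbound : ∀ u ∈ closedBox pm pp, frobD2 F u ≤ K := fun u hu =>
    hK ▸ (frobD2_le_sSup hF₂ hu).trans (le_max_right _ _)
  have hK₀ : 0 ≤ K := hK ▸ zero_le_one.trans (le_max_left _ _)
  refine apply_add_smul_le_of_fderiv_nonpos (hF₂.differentiable two_ne_zero) (fun t ht => ?_)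
    hε₀ hεδ
  refine (fderiv_apply_eigvec_neg hF₂ heig hunit hKbound hK₀ hδ.le (hδ1 l)
    (fun j => (hδ2 j).le) (fun j => ?_) (fun j => ?_)).le
  · have := mul_nonneg ht.1 (hphim j).le
    simp only [Pi.add_apply, Pi.smul_apply, smul_eq_mul]
    linarith [(hw j).1]
  · have := mul_le_mul_of_nonneg_right ht.2 (hphim j).le
    simp only [Pi.add_apply, Pi.smul_apply, smul_eq_mul]
    linarith [(hw j).2]

/-- Near the stable equilibrium `p⁻`, shifting up along the positive eigenvector `φ⁻`
decreases `F` componentwise. -/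
theorem F_ge_F_add_smul_eigvec_near_pminus
    {m : ℕ} (hm : 1 ≤ m)
    (F : (Fin m → ℝ) → Fin m → ℝ) (hF : ContDiff ℝ (⊤ : ℕ∞) F)
    (pm pp : Fin m → ℝ) (hbox : ∀ l, pm l < pp l)
    (hFpm : F pm = 0)
    (lamm : ℝ) (hlamm : 0 < lamm)
    (phim : Fin m → ℝ) (hphim : ∀ l, 0 < phim l)
    (hunit : Real.sqrt (∑ l, phim l ^ 2) = 1)
    (heig : fderiv ℝ F pm phim = (-lamm) • phim)
    (K : ℝ)
    (hK : K = max 1 (sSup {r : ℝ | ∃ w ∈ closedBox pm pp, r = frobD2 F w}))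
    (δ : ℝ) (hδ : 0 < δ)
    (hδ1 : ∀ l, δ * K < lamm * phim l)
    (hδ2 : ∀ l, δ * phim l < pp l - pm l) :
    ∀ w : Fin m → ℝ, (∀ l, pm l ≤ w l ∧ w l ≤ pm l + (δ / 2) * phim l) →
      ∀ ε : ℝ, 0 ≤ ε → ε ≤ δ / 2 → ∀ l, F w l ≥ F (w + ε • phim) l :=
  F_ge_F_add_smul_eigvec_near_pminus_general F hF pm pp lamm phim hphim hunit heig K hK δ hδ hδ1 hδ2
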